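/- arXiv:2510.11638 — 5 statements merged into one kernel-verified Lean document; each statement's English description precedes it below -/
import Mathlib

section
/- Let a ≤ b < c be side lengths of an obtuse triangle (a+b>c, a²+b²<c²), let Δ = -a⁴-b⁴-c⁴+2a²b²+2b²c²+2c²a², h = √Δ/a, and for 0 < ε < h set ℓ(ε) = √((Δ - a²ε²)/(b² - (ε/2)²)). Then ℓ(ε) < 2·√(c² - (ε/2)²). -/
/-!
Writing `Δ = 4b²c² - (b² + c² - a²)²` (Heron), one finds the identity
`4 (c² - ε²/4)(b² - ε²/4) - (Δ - a²ε²) = (b² + c² - a² - ε²/2)²`, so after squaring the claim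
only asks that `ε² ≠ 2(b² + c² - a²)`. This holds because `ε < h ≤ 2b` gives `ε² < 4b²`, while
obtuseness gives `b² + c² - a² > 2b²`.
-/

lemma heron_eq_four_mul_sq_mul_sq_sub_sq (a b c : ℝ) :
    -a ^ 4 - b ^ 4 - c ^ 4 + 2 * a ^ 2 * b ^ 2 + 2 * b ^ 2 * c ^ 2 + 2 * c ^ 2 * a ^ 2
      = 4 * a ^ 2 * b ^ 2 - (a ^ 2 + b ^ 2 - c ^ 2) ^ 2 := by
  ring

lemma four_mul_sub_mul_sub_sub_heron (a b c e : ℝ) :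
    4 * (c ^ 2 - (e / 2) ^ 2) * (b ^ 2 - (e / 2) ^ 2)
      - ((-a ^ 4 - b ^ 4 - c ^ 4 + 2 * a ^ 2 * b ^ 2 + 2 * b ^ 2 * c ^ 2 + 2 * c ^ 2 * a ^ 2)
        - a ^ 2 * e ^ 2)
      = (b ^ 2 + c ^ 2 - a ^ 2 - e ^ 2 / 2) ^ 2 := by
  ring

lemma sq_lt_four_mul_sq_of_sq_mul_sq_lt_heron {a b c e : ℝ} (ha : 0 < a)
    (h : a ^ 2 * e ^ 2
      < -a ^ 4 - b ^ 4 - c ^ 4 + 2 * a ^ 2 * b ^ 2 + 2 * b ^ 2 * c ^ 2 + 2 * c ^ 2 * a ^ 2) :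
    e ^ 2 < 4 * b ^ 2 := by
  rw [heron_eq_four_mul_sq_mul_sq_sub_sq] at h
  have : a ^ 2 * e ^ 2 < a ^ 2 * (4 * b ^ 2) := by nlinarith [sq_nonneg (a ^ 2 + b ^ 2 - c ^ 2)]
  exact lt_of_mul_lt_mul_left this (by positivity)

lemma heron_sub_lt_four_mul_sub_mul_sub {a b c e : ℝ} (hobt : a ^ 2 + b ^ 2 < c ^ 2)
    (he : e ^ 2 < 4 * b ^ 2) :
    (-a ^ 4 - b ^ 4 - c ^ 4 + 2 * a ^ 2 * b ^ 2 + 2 * b ^ 2 * c ^ 2 + 2 * c ^ 2 * a ^ 2)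
        - a ^ 2 * e ^ 2
      < 4 * (c ^ 2 - (e / 2) ^ 2) * (b ^ 2 - (e / 2) ^ 2) := by
  have hpos : 0 < b ^ 2 + c ^ 2 - a ^ 2 - e ^ 2 / 2 := by linarith
  have := four_mul_sub_mul_sub_sub_heron a b c e
  nlinarith [sq_pos_of_pos hpos]

lemma Real.sqrt_lt_two_mul_sqrt {x y : ℝ} (hy : 0 < y) (h : x < 4 * y) : √x < 2 * √y := by
  have h2 : (2 * √y) ^ 2 = 4 * y := by rw [mul_pow, Real.sq_sqrt hy.le]; norm_num
  rw [Real.sqrt_lt' (by positivity), h2]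
  exact h

theorem stmt2_general (a b c ε : ℝ) (ha : 0 < a)
    (hobt : a ^ 2 + b ^ 2 < c ^ 2)
    (Δ : ℝ)
    (hΔ : Δ = -a ^ 4 - b ^ 4 - c ^ 4 + 2 * a ^ 2 * b ^ 2 + 2 * b ^ 2 * c ^ 2 + 2 * c ^ 2 * a ^ 2)
    (hε : 0 < ε) (hεh : ε < Real.sqrt Δ / a) :
    Real.sqrt ((Δ - a ^ 2 * ε ^ 2) / (b ^ 2 - (ε / 2) ^ 2))
      < 2 * Real.sqrt (c ^ 2 - (ε / 2) ^ 2) := by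
  have haε : a ^ 2 * ε ^ 2 < Δ := by
    rw [← mul_pow, ← Real.lt_sqrt (by positivity), mul_comm]
    rwa [lt_div_iff₀ ha] at hεh
  subst hΔ
  have hε2b : ε ^ 2 < 4 * b ^ 2 := sq_lt_four_mul_sq_of_sq_mul_sq_lt_heron ha haε
  have hb : 0 < b ^ 2 - (ε / 2) ^ 2 := by linarith
  have hc : 0 < c ^ 2 - (ε / 2) ^ 2 := by nlinarith
  apply Real.sqrt_lt_two_mul_sqrt hc
  rw [div_lt_iff₀ hb]
  exact heron_sub_lt_four_mul_sub_mul_sub hobt hε2b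

theorem stmt2 (a b c ε : ℝ) (ha : 0 < a) (hab : a ≤ b) (hbc : b < c)
    (htri : a + b > c) (hobt : a ^ 2 + b ^ 2 < c ^ 2)
    (Δ : ℝ)
    (hΔ : Δ = -a ^ 4 - b ^ 4 - c ^ 4 + 2 * a ^ 2 * b ^ 2 + 2 * b ^ 2 * c ^ 2 + 2 * c ^ 2 * a ^ 2)
    (hε : 0 < ε) (hεh : ε < Real.sqrt Δ / a) :
    Real.sqrt ((Δ - a ^ 2 * ε ^ 2) / (b ^ 2 - (ε / 2) ^ 2))
      < 2 * Real.sqrt (c ^ 2 - (ε / 2) ^ 2) :=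
  stmt2_general a b c ε ha hobt Δ hΔ hε hεh
end

section
/- Let a ≤ b < c be side lengths of an obtuse triangle with a² + b² < c², and let 0 < ε < √Δ/a where Δ = -a⁴-b⁴-c⁴+2a²b²+2b²c²+2c²a². Set b' = √(b² - (ε/2)²) and c' = √(c² - (ε/2)²). Then the triple (a, b', c') satisfies the strict triangle inequality and 16 times the squared area of the triangle with sides a, b', c' (by Heron's formula) equals Δ - a²ε². -/
/-! Writing `H(x, y, z) = 4x²y² - (x² + y² - z²)²`, lowering both `b²` and `c²` by `(ε/2)²`
leaves `a² + b² - c²` unchanged and lowers `H` by exactly `a²ε²`. The bound `ε < √Δ / a` keeps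
`H(a, b', c')` positive, and a positive Heron expression of nonnegative sides forces the strict
triangle inequalities through the factorisation `H = (x+y+z)(-x+y+z)(x-y+z)(x+y-z)`. -/

def heron (x y z : ℝ) : ℝ :=
  2 * x ^ 2 * y ^ 2 + 2 * y ^ 2 * z ^ 2 + 2 * z ^ 2 * x ^ 2 - x ^ 4 - y ^ 4 - z ^ 4

namespace heron

variable (x y z : ℝ)

theorem eq_mul : heron x y z = (x + y + z) * (-x + y + z) * (x - y + z) * (x + y - z) := by
  unfold heron; ring

theorem eq_sub_sq : heron x y z = 4 * x ^ 2 * y ^ 2 - (x ^ 2 + y ^ 2 - z ^ 2) ^ 2 := by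
  unfold heron; ring

theorem rotate : heron y z x = heron x y z := by
  unfold heron; ring

theorem swap_right : heron x z y = heron x y z := by
  unfold heron; ring

theorem le_four_mul_sq : heron x y z ≤ 4 * x ^ 2 * y ^ 2 := by
  rw [eq_sub_sq]
  linarith [sq_nonneg (x ^ 2 + y ^ 2 - z ^ 2)]

variable {x y z}

theorem lt_add_of_pos (hx : 0 ≤ x) (hy : 0 ≤ y) (hz : 0 ≤ z) (h : 0 < heron x y z) :
    z < x + y := by
  by_contra! hxyz
  have : heron x y z ≤ 0 := by
    rw [eq_mul]
    exact mul_nonpos_of_nonneg_of_nonpos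
      (mul_nonneg (mul_nonneg (by linarith) (by linarith)) (by linarith)) (by linarith)
  linarith

theorem triangle_of_pos (hx : 0 ≤ x) (hy : 0 ≤ y) (hz : 0 ≤ z) (h : 0 < heron x y z) :
    x + y > z ∧ y + z > x ∧ z + x > y :=
  ⟨lt_add_of_pos hx hy hz h,
    lt_add_of_pos hy hz hx (by rwa [rotate]),
    lt_add_of_pos hz hx hy (by rwa [rotate, rotate])⟩

theorem sub_of_sq_eq {y' z' t : ℝ} (hy : y' ^ 2 = y ^ 2 - t) (hz : z' ^ 2 = z ^ 2 - t) :
    heron x y' z' = heron x y z - 4 * x ^ 2 * t := by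
  rw [eq_sub_sq, eq_sub_sq, hy, hz]; ring

end heron

theorem stmt3_general (a b c ε : ℝ) (ha : 0 < a)
    (Δ : ℝ)
    (hΔ : Δ = -a ^ 4 - b ^ 4 - c ^ 4 + 2 * a ^ 2 * b ^ 2 + 2 * b ^ 2 * c ^ 2 + 2 * c ^ 2 * a ^ 2)
    (hε : 0 < ε) (hεh : ε < Real.sqrt Δ / a)
    (b' c' : ℝ)
    (hb' : b' = Real.sqrt (b ^ 2 - (ε / 2) ^ 2))
    (hc' : c' = Real.sqrt (c ^ 2 - (ε / 2) ^ 2)) :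
    (a + b' > c' ∧ b' + c' > a ∧ c' + a > b') ∧
      2 * a ^ 2 * b' ^ 2 + 2 * b' ^ 2 * c' ^ 2 + 2 * c' ^ 2 * a ^ 2
          - a ^ 4 - b' ^ 4 - c' ^ 4
        = Δ - a ^ 2 * ε ^ 2 := by
  replace hΔ : Δ = heron a b c := by rw [hΔ, heron]; ring
  have hεΔ : a ^ 2 * ε ^ 2 < Δ := by
    rw [← mul_pow, mul_comm]
    exact (Real.lt_sqrt (by positivity)).mp ((lt_div_iff₀ ha).mp hεh)
  have hshift_le {y z : ℝ} (hΔy : Δ = heron a y z) : (ε / 2) ^ 2 ≤ y ^ 2 := by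
    have := hεΔ.trans_le (hΔy ▸ heron.le_four_mul_sq a y z)
    nlinarith [pow_pos ha 2]
  have hb2 : b' ^ 2 = b ^ 2 - (ε / 2) ^ 2 := hb' ▸ Real.sq_sqrt (sub_nonneg.mpr (hshift_le hΔ))
  have hc2 : c' ^ 2 = c ^ 2 - (ε / 2) ^ 2 :=
    hc' ▸ Real.sq_sqrt (sub_nonneg.mpr (hshift_le (hΔ.trans (heron.swap_right a b c).symm)))
  have hH : heron a b' c' = Δ - a ^ 2 * ε ^ 2 := by
    rw [heron.sub_of_sq_eq hb2 hc2, hΔ]; ring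
  exact ⟨heron.triangle_of_pos ha.le (hb' ▸ Real.sqrt_nonneg _) (hc' ▸ Real.sqrt_nonneg _)
    (by linarith), hH⟩

theorem stmt3 (a b c ε : ℝ) (ha : 0 < a) (hab : a ≤ b) (hbc : b < c)
    (htri : a + b > c) (hobt : a ^ 2 + b ^ 2 < c ^ 2)
    (Δ : ℝ)
    (hΔ : Δ = -a ^ 4 - b ^ 4 - c ^ 4 + 2 * a ^ 2 * b ^ 2 + 2 * b ^ 2 * c ^ 2 + 2 * c ^ 2 * a ^ 2)
    (hε : 0 < ε) (hεh : ε < Real.sqrt Δ / a)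
    (b' c' : ℝ)
    (hb' : b' = Real.sqrt (b ^ 2 - (ε / 2) ^ 2))
    (hc' : c' = Real.sqrt (c ^ 2 - (ε / 2) ^ 2)) :
    (a + b' > c' ∧ b' + c' > a ∧ c' + a > b') ∧
      2 * a ^ 2 * b' ^ 2 + 2 * b' ^ 2 * c' ^ 2 + 2 * c' ^ 2 * a ^ 2
          - a ^ 4 - b' ^ 4 - c' ^ 4
        = Δ - a ^ 2 * ε ^ 2 :=
  stmt3_general a b c ε ha Δ hΔ hε hεh b' c' hb' hc'
end

section
/- Let N ≥ 2, s > 0, and let Γ be an N-dimensional sphere of radius s in Euclidean space (the set of points at distance s from a center O inside an (N+1)-dimensional affine subspace). For any two distinct points U, V ∈ Γ and any d ∈ (0, 2s), there exist k ∈ ℕ and points X₁,…,X_k ∈ Γ such that ‖U−X₁‖ = ‖X₁−X₂‖ = ⋯ = ‖X_{k−1}−X_k‖ = ‖X_k−V‖ = d. -/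
open Module Metric Relation
open scoped RealInnerProductSpace

/-!
On a sphere of radius `s` in an inner product space of dimension at least `3`, two points `p`, `q`
with `‖p - q‖ < 2s` are joined by two steps of length `d` as soon as
`s² ‖p - q‖² ≤ d² (4s² - d²)`: take `α (p + q) + β e` with `e` a unit vector orthogonal to `p`
and `q`. Replacing `q` by the point `s (p + q) / ‖p + q‖` of the sphere at least halves
`‖p - q‖²`, so repeated bisection reduces every non-antipodal pair to that case. An arbitrary pair
is first split at the point `s e`, at distance `√2 s` from both.
-/

theorem Relation.ReflTransGen.exists_fin_chain {α : Type*} {r : α → α → Prop} {a b : α}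
    (h : ReflTransGen r a b) :
    ∃ (k : ℕ) (X : Fin (k + 1) → α), X 0 = a ∧ X (Fin.last k) = b ∧
      ∀ i : Fin k, r (X i.castSucc) (X i.succ) := by
  induction h with
  | refl => exact ⟨0, fun _ ↦ a, rfl, rfl, Fin.elim0⟩
  | tail _ hbc ih =>
    obtain ⟨k, X, hX0, hXk, hX⟩ := ih
    refine ⟨k + 1, Fin.snoc X _, by simpa [Fin.snoc] using hX0, Fin.snoc_last _ _, ?_⟩
    refine Fin.lastCases ?_ (fun i ↦ ?_)
    · simpa [Fin.succ_last, hXk] using hbc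
    · rw [Fin.succ_castSucc, Fin.snoc_castSucc, Fin.snoc_castSucc]
      exact hX i

section Chain

variable {α : Type*} [PseudoMetricSpace α]

/-- At least two steps, as in the chain `U, X₀, …, X_k, V` of the theorem. -/
def JoinedBySteps (d : ℝ) (x y : α) : Prop :=
  ∃ w, dist x w = d ∧ TransGen (fun a b : α ↦ dist a b = d) w y

theorem joinedBySteps_of_dist_eq {d : ℝ} {x w y : α} (hxw : dist x w = d) (hwy : dist w y = d) :
    JoinedBySteps d x y :=
  ⟨w, hxw, .single hwy⟩

theorem JoinedBySteps.trans {d : ℝ} {x y z : α} (hxy : JoinedBySteps d x y)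
    (hyz : JoinedBySteps d y z) : JoinedBySteps d x z :=
  let ⟨w, hxw, hwy⟩ := hxy
  let ⟨_, hyv, hvz⟩ := hyz
  ⟨w, hxw, hwy.trans (.head hyv hvz)⟩

theorem JoinedBySteps.exists_fin_chain {d : ℝ} {x y : α} (h : JoinedBySteps d x y) :
    ∃ (k : ℕ) (X : Fin (k + 1) → α), dist x (X 0) = d ∧
      (∀ i : Fin k, dist (X i.castSucc) (X i.succ) = d) ∧ dist (X (Fin.last k)) y = d := by
  obtain ⟨w, hxw, hwy⟩ := h
  obtain ⟨_, hww', hw'y⟩ := TransGen.tail'_iff.mp hwy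
  obtain ⟨k, X, rfl, rfl, hX⟩ := hww'.exists_fin_chain
  exact ⟨k, X, hxw, hX, hw'y⟩

end Chain

theorem dist_sphere_eq_norm_sub {E : Type*} [SeminormedAddCommGroup E] {c : E} {r : ℝ}
    (x y : sphere c r) : dist x y = ‖(x : E) - y‖ := by
  rw [Subtype.dist_eq, dist_eq_norm]

section Sphere

variable {F : Type*} [NormedAddCommGroup F] [InnerProductSpace ℝ F] {s d : ℝ} {p q : F}

theorem inner_self_add_eq_of_norm_eq (h : ‖p‖ = ‖q‖) : ⟪p, p + q⟫ = ‖p + q‖ ^ 2 / 2 := by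
  rw [inner_add_right, real_inner_self_eq_norm_sq, norm_add_sq_real, h]
  ring

theorem norm_add_sq_add_norm_sub_sq (hp : ‖p‖ = s) (hq : ‖q‖ = s) :
    ‖p + q‖ ^ 2 + ‖p - q‖ ^ 2 = 4 * s ^ 2 := by
  rw [norm_add_sq_real, norm_sub_sq_real, hp, hq]
  ring

theorem exists_norm_eq_one_inner_eq_zero (hF : 2 < finrank ℝ F) (p q : F) :
    ∃ e : F, ‖e‖ = 1 ∧ ⟪p, e⟫ = 0 ∧ ⟪q, e⟫ = 0 := by
  have : FiniteDimensional ℝ F := Module.finite_of_finrank_pos (by omega)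
  set K := Submodule.span ℝ (Set.range ![p, q])
  have hK : finrank ℝ K ≤ 2 := finrank_range_le_card (R := ℝ) ![p, q]
  have hKperp : Kᗮ ≠ ⊥ := by
    intro h
    have := K.finrank_add_finrank_orthogonal
    rw [h, finrank_bot] at this
    omega
  obtain ⟨e, he, he0⟩ := Submodule.exists_mem_ne_zero_of_ne_bot hKperp
  have hinner (x : F) (hx : x ∈ Set.range ![p, q]) : ⟪x, ‖e‖⁻¹ • e⟫ = 0 := by
    rw [real_inner_smul_right, K.inner_right_of_mem_orthogonal (Submodule.subset_span hx) he,
      mul_zero]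
  exact ⟨‖e‖⁻¹ • e, norm_smul_inv_norm he0, hinner p ⟨0, rfl⟩, hinner q ⟨1, rfl⟩⟩

theorem exists_norm_eq_norm_sub_sq_le_half (hp : ‖p‖ = s) (hq : ‖q‖ = s)
    (hpq : ‖p - q‖ < 2 * s) :
    ∃ x : F, ‖x‖ = s ∧ ‖p - x‖ ^ 2 ≤ ‖p - q‖ ^ 2 / 2 ∧ ‖q - x‖ ^ 2 ≤ ‖p - q‖ ^ 2 / 2 := by
  have hs : 0 ≤ s := hp ▸ norm_nonneg p
  have hpar := norm_add_sq_add_norm_sub_sq hp hq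
  have hL : 0 < ‖p + q‖ := by nlinarith [norm_nonneg (p - q), norm_nonneg (p + q)]
  have hL2s : ‖p + q‖ ≤ 2 * s := (norm_add_le p q).trans_eq (by rw [hp, hq]; ring)
  have hx : ‖(s / ‖p + q‖) • (p + q)‖ = s := by
    rw [norm_smul, Real.norm_of_nonneg (by positivity), div_mul_cancel₀ _ hL.ne']
  have hdist (a : F) (ha : ‖a‖ = s) (hinner : ⟪a, p + q⟫ = ‖p + q‖ ^ 2 / 2) :
      ‖a - (s / ‖p + q‖) • (p + q)‖ ^ 2 ≤ ‖p - q‖ ^ 2 / 2 := by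
    rw [norm_sub_sq_real, hx, ha, real_inner_smul_right, hinner]
    field_simp
    nlinarith
  refine ⟨_, hx, hdist p hp (inner_self_add_eq_of_norm_eq (hp.trans hq.symm)), hdist q hq ?_⟩
  rw [add_comm p q, inner_self_add_eq_of_norm_eq (hq.trans hp.symm)]

theorem exists_norm_eq_norm_sub_eq_of_sq_mul_le (hF : 2 < finrank ℝ F) (hd : 0 ≤ d)
    (hp : ‖p‖ = s) (hq : ‖q‖ = s) (hpq : ‖p - q‖ < 2 * s)
    (hpqd : s ^ 2 * ‖p - q‖ ^ 2 ≤ d ^ 2 * (4 * s ^ 2 - d ^ 2)) :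
    ∃ x : F, ‖x‖ = s ∧ ‖p - x‖ = d ∧ ‖q - x‖ = d := by
  have hs : 0 ≤ s := hp ▸ norm_nonneg p
  obtain ⟨e, he, hpe, hqe⟩ := exists_norm_eq_one_inner_eq_zero hF p q
  have hpar := norm_add_sq_add_norm_sub_sq hp hq
  set A := ‖p + q‖ ^ 2
  have hA : 0 < A := by nlinarith [norm_nonneg (p - q)]
  -- `α` puts `x` at distance `d` from `p` and `q`, the height `β` then puts it on the sphere.
  set α := (2 * s ^ 2 - d ^ 2) / A
  have hαA : α * A = 2 * s ^ 2 - d ^ 2 := div_mul_cancel₀ _ hA.ne'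
  have hβ : 0 ≤ s ^ 2 - α ^ 2 * A := by
    have : (α * A) ^ 2 ≤ s ^ 2 * A := by rw [hαA]; nlinarith
    nlinarith
  set x := α • (p + q) + √(s ^ 2 - α ^ 2 * A) • e
  have hx : ‖x‖ = s := by
    rw [← sq_eq_sq₀ (norm_nonneg x) hs, norm_add_sq_real, norm_smul, norm_smul,
      real_inner_smul_left, real_inner_smul_right, inner_add_left, hpe, hqe, he, mul_pow,
      mul_pow, Real.norm_eq_abs, Real.norm_eq_abs, sq_abs, sq_abs, Real.sq_sqrt hβ]
    ring
  have hdist (a : F) (ha : ‖a‖ = s) (hae : ⟪a, e⟫ = 0) (hinner : ⟪a, p + q⟫ = A / 2) :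
      ‖a - x‖ = d := by
    rw [← sq_eq_sq₀ (norm_nonneg _) hd, norm_sub_sq_real, ha, hx, inner_add_right,
      real_inner_smul_right, real_inner_smul_right, hinner, hae]
    linarith
  refine ⟨x, hx, hdist p hp hpe (inner_self_add_eq_of_norm_eq (hp.trans hq.symm)),
    hdist q hq hqe ?_⟩
  rw [add_comm p q, inner_self_add_eq_of_norm_eq (hq.trans hp.symm), add_comm]

theorem joinedBySteps_of_sq_mul_dist_sq_le (hF : 2 < finrank ℝ F) (hd : 0 ≤ d) (j : ℕ)
    {x y : sphere (0 : F) s} (hxy : dist x y < 2 * s)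
    (hxyd : s ^ 2 * dist x y ^ 2 ≤ 2 ^ j * (d ^ 2 * (4 * s ^ 2 - d ^ 2))) :
    JoinedBySteps d x y := by
  induction j generalizing x y with
  | zero =>
    rw [dist_sphere_eq_norm_sub] at hxy hxyd
    obtain ⟨w, hw, hxw, hyw⟩ := exists_norm_eq_norm_sub_eq_of_sq_mul_le hF hd
      (norm_eq_of_mem_sphere x) (norm_eq_of_mem_sphere y) hxy (by simpa using hxyd)
    refine joinedBySteps_of_dist_eq (w := ⟨w, mem_sphere_zero_iff_norm.mpr hw⟩) ?_ ?_
    · rwa [dist_sphere_eq_norm_sub]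
    · rwa [dist_sphere_eq_norm_sub, norm_sub_rev]
  | succ j ih =>
    obtain ⟨w, hw, hxw, hyw⟩ := exists_norm_eq_norm_sub_sq_le_half (norm_eq_of_mem_sphere x)
      (norm_eq_of_mem_sphere y) (by rwa [dist_sphere_eq_norm_sub] at hxy)
    set w' : sphere (0 : F) s := ⟨w, mem_sphere_zero_iff_norm.mpr hw⟩
    have hxw' : dist x w' ^ 2 ≤ dist x y ^ 2 / 2 := by
      rw [dist_sphere_eq_norm_sub, dist_sphere_eq_norm_sub]; exact hxw
    have hwy' : dist w' y ^ 2 ≤ dist x y ^ 2 / 2 := by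
      rw [dist_sphere_eq_norm_sub, dist_sphere_eq_norm_sub, norm_sub_rev]; exact hyw
    have hxy0 := dist_nonneg (x := x) (y := y)
    rw [pow_succ 2 j] at hxyd
    refine (ih (y := w') ?_ ?_).trans (ih (x := w') ?_ ?_)
    · nlinarith [dist_nonneg (x := x) (y := w')]
    · nlinarith
    · nlinarith [dist_nonneg (x := w') (y := y)]
    · nlinarith

theorem joinedBySteps_of_dist_lt (hF : 2 < finrank ℝ F) (hd : 0 < d) (hd2 : d < 2 * s)
    {x y : sphere (0 : F) s} (hxy : dist x y < 2 * s) : JoinedBySteps d x y := by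
  have hD : 0 < d ^ 2 * (4 * s ^ 2 - d ^ 2) := by
    have : 0 < 4 * s ^ 2 - d ^ 2 := by nlinarith
    positivity
  obtain ⟨j, hj⟩ := pow_unbounded_of_one_lt (s ^ 2 * dist x y ^ 2 / (d ^ 2 * (4 * s ^ 2 - d ^ 2)))
    one_lt_two
  exact joinedBySteps_of_sq_mul_dist_sq_le hF hd.le j hxy ((div_lt_iff₀ hD).mp hj).le

theorem joinedBySteps_sphere (hF : 2 < finrank ℝ F) (hd : 0 < d) (hd2 : d < 2 * s)
    (x y : sphere (0 : F) s) : JoinedBySteps d x y := by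
  have hs : 0 < s := by linarith
  obtain ⟨e, he, hxe, hye⟩ := exists_norm_eq_one_inner_eq_zero hF x y
  let w : sphere (0 : F) s := ⟨s • e, by
    rw [mem_sphere_zero_iff_norm, norm_smul, he, Real.norm_of_nonneg hs.le, mul_one]⟩
  have hw (z : sphere (0 : F) s) (hze : ⟪(z : F), e⟫ = 0) : dist z w < 2 * s := by
    rw [dist_sphere_eq_norm_sub]
    change ‖(z : F) - s • e‖ < 2 * s
    rw [← sq_lt_sq₀ (norm_nonneg _) (by linarith), norm_sub_sq_real, norm_eq_of_mem_sphere,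
      norm_smul, real_inner_smul_right, hze, he, Real.norm_of_nonneg hs.le]
    nlinarith
  exact (joinedBySteps_of_dist_lt hF hd hd2 (hw x hxe)).trans
    (joinedBySteps_of_dist_lt hF hd hd2 (dist_comm y w ▸ hw y hye))

end Sphere

theorem stmt7_general (N m : ℕ) (hN : 2 ≤ N) (s d : ℝ)
    (hd : 0 < d) (hd2 : d < 2 * s)
    (Pl : AffineSubspace ℝ (EuclideanSpace ℝ (Fin m)))
    (hPl : Module.finrank ℝ Pl.direction = N + 1)
    (O : EuclideanSpace ℝ (Fin m)) (hO : O ∈ Pl)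
    (U V : EuclideanSpace ℝ (Fin m)) (hU : U ∈ Pl) (hV : V ∈ Pl)
    (hUO : dist U O = s) (hVO : dist V O = s) :
    ∃ (k : ℕ) (X : Fin (k + 1) → EuclideanSpace ℝ (Fin m)),
      (∀ i, X i ∈ Pl ∧ dist (X i) O = s) ∧
      dist U (X 0) = d ∧
      (∀ i : Fin k, dist (X i.castSucc) (X i.succ) = d) ∧
      dist (X (Fin.last k)) V = d := by
  let f (x : sphere (0 : Pl.direction) s) : EuclideanSpace ℝ (Fin m) := (x : Pl.direction) +ᵥ O
  have hf (x y : sphere (0 : Pl.direction) s) : dist (f x) (f y) = dist x y :=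
    dist_vadd_cancel_right _ _ O
  have hlift (A : EuclideanSpace ℝ (Fin m)) (hA : A ∈ Pl) (hAO : dist A O = s) :
      ∃ a : sphere (0 : Pl.direction) s, f a = A :=
    ⟨⟨⟨A -ᵥ O, Pl.vsub_mem_direction hA hO⟩, by simpa [dist_eq_norm_vsub] using hAO⟩,
      vsub_vadd A O⟩
  obtain ⟨u, rfl⟩ := hlift U hU hUO
  obtain ⟨v, rfl⟩ := hlift V hV hVO
  obtain ⟨k, X, hu, hX, hv⟩ :=
    (joinedBySteps_sphere (by omega) hd hd2 u v).exists_fin_chain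
  refine ⟨k, f ∘ X, fun i ↦ ⟨Pl.vadd_mem_of_mem_direction (X i).1.2 hO, ?_⟩, ?_, ?_, ?_⟩
  · exact (dist_vadd_left _ O).trans (norm_eq_of_mem_sphere (X i))
  all_goals simpa [hf]

theorem stmt7 (N m : ℕ) (hN : 2 ≤ N) (hm : N + 1 ≤ m) (s d : ℝ) (hs : 0 < s)
    (hd : 0 < d) (hd2 : d < 2 * s)
    (Pl : AffineSubspace ℝ (EuclideanSpace ℝ (Fin m)))
    (hPl : Module.finrank ℝ Pl.direction = N + 1)
    (O : EuclideanSpace ℝ (Fin m)) (hO : O ∈ Pl)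
    (U V : EuclideanSpace ℝ (Fin m)) (hU : U ∈ Pl) (hV : V ∈ Pl)
    (hUO : dist U O = s) (hVO : dist V O = s) (hUV : U ≠ V) :
    ∃ (k : ℕ) (X : Fin (k + 1) → EuclideanSpace ℝ (Fin m)),
      (∀ i, X i ∈ Pl ∧ dist (X i) O = s) ∧
      dist U (X 0) = d ∧
      (∀ i : Fin k, dist (X i.castSucc) (X i.succ) = d) ∧
      dist (X (Fin.last k)) V = d :=
  stmt7_general N m hN s d hd hd2 Pl hPl O hO U V hU hV hUO hVO
end

section
/- Let τ be an r-coloring (r ≥ 4) of the product configuration S × B, where S is a set of 3s+1 points with all pairwise distances equal to a (a regular 3s-dimensional simplex of side a) and B = {v₁,…,v_{s+1}} is a planar path with ‖v_i − v_{i+1}‖ = b for 1 ≤ i ≤ s and ‖v₁ − v_{s+1}‖ = a, embedded in orthogonal subspaces. If τ assigns different colors to every pair of points at distance a, then there exist indices i ∈ {1,…,s} and two points x, x' ∈ S such that the four points (x, v_i), (x, v_{i+1}), (x', v_i), (x', v_{i+1}) receive four pairwise distinct colors; these four points form a rectangle with side lengths a and b. -/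
/-!
Read the coloring as a matrix `c j k = τ (S j, v k)`. Points in the same column are at distance
`a`, so every column is injective; the endpoints of every row are at distance `a`, so every row
changes color at some step `i`. With `3s + 1` rows and only `s` steps, some step `i` is a change
step for at least four rows. Among four such rows, a fixed row `j` clashes diagonally with at most
two others (one through each injective column), so some `j'` remains, and the four cells of rows
`j, j'` in columns `i, i + 1` get four distinct colors.
-/

open Function Finset

lemma Fin.exists_castSucc_ne_succ_of_ne {α : Type*} {s : ℕ} {c : Fin (s + 1) → α}
    (h : c 0 ≠ c (Fin.last s)) : ∃ i : Fin s, c i.castSucc ≠ c i.succ := by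
  by_contra! hconst
  have : ∀ k : Fin (s + 1), c 0 = c k := by
    intro k
    induction k using Fin.induction with
    | zero => rfl
    | succ i ih => exact ih.trans (hconst i)
  exact h (this _)

lemma Finset.exists_ne_cross_ne_of_injective {ι α : Type*} {f g : ι → α}
    (hf : Injective f) (hg : Injective g) {T : Finset ι} (hT : 4 ≤ #T) :
    ∃ j ∈ T, ∃ j' ∈ T, j ≠ j' ∧ f j ≠ g j' ∧ f j' ≠ g j := by
  classical
  obtain ⟨j, hj⟩ : T.Nonempty := card_pos.mp (by omega)
  set U := T.erase j
  have hU : 3 ≤ #U := by rw [card_erase_of_mem hj]; omega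
  by_contra! hclash
  have hcover : U ⊆ {j' ∈ U | g j' = f j} ∪ {j' ∈ U | f j' = g j} := by
    intro j' hj'
    obtain ⟨hne, hj'T⟩ := mem_erase.mp hj'
    by_cases hfg : f j = g j'
    · exact mem_union_left _ (mem_filter.mpr ⟨hj', hfg.symm⟩)
    · exact mem_union_right _ (mem_filter.mpr ⟨hj', hclash j hj j' hj'T hne.symm hfg⟩)
  have hg1 : #{j' ∈ U | g j' = f j} ≤ 1 := card_le_one.mpr fun x hx y hy =>
    hg ((mem_filter.mp hx).2.trans (mem_filter.mp hy).2.symm)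
  have hf1 : #{j' ∈ U | f j' = g j} ≤ 1 := card_le_one.mpr fun x hx y hy =>
    hf ((mem_filter.mp hx).2.trans (mem_filter.mp hy).2.symm)
  have := (card_le_card hcover).trans (card_union_le _ _)
  omega

theorem exists_rainbow_rectangle_of_injective_columns {ι α : Type*} [Fintype ι]
    {s : ℕ} (c : ι → Fin (s + 1) → α) (hcol : ∀ k, Injective fun j => c j k)
    (hrow : ∀ j, c j 0 ≠ c j (Fin.last s)) (hcard : 3 * s < Fintype.card ι) :
    ∃ (i : Fin s) (j j' : ι), j ≠ j' ∧
      c j i.castSucc ≠ c j i.succ ∧ c j i.castSucc ≠ c j' i.castSucc ∧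
      c j i.castSucc ≠ c j' i.succ ∧ c j i.succ ≠ c j' i.castSucc ∧
      c j i.succ ≠ c j' i.succ ∧ c j' i.castSucc ≠ c j' i.succ := by
  choose F hF using fun j => Fin.exists_castSucc_ne_succ_of_ne (hrow j)
  obtain ⟨i, hi⟩ := Fintype.exists_lt_card_fiber_of_mul_lt_card F
    (by rwa [Fintype.card_fin, mul_comm])
  have hchange : ∀ j ∈ ({j | F j = i} : Finset ι), c j i.castSucc ≠ c j i.succ := by
    intro j hj
    rw [← (mem_filter.mp hj).2]
    exact hF j
  obtain ⟨j, hj, j', hj', hne, hcross, hcross'⟩ :=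
    exists_ne_cross_ne_of_injective (hcol i.castSucc) (hcol i.succ) hi
  exact ⟨i, j, j', hne, hchange j hj, (hcol _).ne hne, hcross, fun h => hcross' h.symm,
    (hcol _).ne hne, hchange j' hj'⟩

section ProdL2

variable {α β : Type*} [SeminormedAddCommGroup α] [SeminormedAddCommGroup β]

lemma WithLp.prod_dist_toLp_left_eq (x : α) (y₁ y₂ : β) :
    dist (WithLp.toLp 2 (x, y₁)) (WithLp.toLp 2 (x, y₂)) = dist y₁ y₂ := by
  rw [WithLp.prod_dist_eq_of_L2]
  simp [Real.sqrt_sq dist_nonneg]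

lemma WithLp.prod_dist_toLp_right_eq (x₁ x₂ : α) (y : β) :
    dist (WithLp.toLp 2 (x₁, y)) (WithLp.toLp 2 (x₂, y)) = dist x₁ x₂ := by
  rw [WithLp.prod_dist_eq_of_L2]
  simp [Real.sqrt_sq dist_nonneg]

end ProdL2

theorem stmt14_general (n₁ n₂ s r : ℕ) (a b : ℝ)
    (S : Fin (3 * s + 1) → EuclideanSpace ℝ (Fin n₁))
    (hS : ∀ i j, i ≠ j → dist (S i) (S j) = a)
    (v : Fin (s + 1) → EuclideanSpace ℝ (Fin n₂))
    (hvb : ∀ i : Fin s, dist (v i.castSucc) (v i.succ) = b)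
    (hva : dist (v 0) (v (Fin.last s)) = a)
    (τ : WithLp 2 (EuclideanSpace ℝ (Fin n₁) × EuclideanSpace ℝ (Fin n₂)) → Fin r)
    (hτ : ∀ (i j : Fin (3 * s + 1)) (k l : Fin (s + 1)),
      dist ((WithLp.equiv 2 (EuclideanSpace ℝ (Fin n₁) × EuclideanSpace ℝ (Fin n₂))).symm (S i, v k))
          ((WithLp.equiv 2 (EuclideanSpace ℝ (Fin n₁) × EuclideanSpace ℝ (Fin n₂))).symm (S j, v l)) = a →
      τ ((WithLp.equiv 2 (EuclideanSpace ℝ (Fin n₁) × EuclideanSpace ℝ (Fin n₂))).symm (S i, v k)) ≠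
        τ ((WithLp.equiv 2 (EuclideanSpace ℝ (Fin n₁) × EuclideanSpace ℝ (Fin n₂))).symm (S j, v l))) :
    ∃ (i : Fin s) (j j' : Fin (3 * s + 1)), j ≠ j' ∧
      ∀ (p₁ p₂ p₃ p₄ : WithLp 2 (EuclideanSpace ℝ (Fin n₁) × EuclideanSpace ℝ (Fin n₂))),
        p₁ = (WithLp.equiv 2 _).symm (S j, v i.castSucc) →
        p₂ = (WithLp.equiv 2 _).symm (S j, v i.succ) →
        p₃ = (WithLp.equiv 2 _).symm (S j', v i.castSucc) →
        p₄ = (WithLp.equiv 2 _).symm (S j', v i.succ) →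
        (dist p₁ p₂ = b ∧ dist p₃ p₄ = b ∧ dist p₁ p₃ = a ∧ dist p₂ p₄ = a) ∧
        (τ p₁ ≠ τ p₂ ∧ τ p₁ ≠ τ p₃ ∧ τ p₁ ≠ τ p₄ ∧
          τ p₂ ≠ τ p₃ ∧ τ p₂ ≠ τ p₄ ∧ τ p₃ ≠ τ p₄) := by
  simp only [WithLp.equiv_symm_apply] at hτ ⊢
  have hcolumn : ∀ j j' k, j ≠ j' →
      dist (WithLp.toLp 2 (S j, v k)) (WithLp.toLp 2 (S j', v k)) = a :=
    fun j j' k hne => (WithLp.prod_dist_toLp_right_eq _ _ _).trans (hS j j' hne)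
  obtain ⟨i, j, j', hne, hcolors⟩ :=
    exists_rainbow_rectangle_of_injective_columns (fun j k => τ (WithLp.toLp 2 (S j, v k)))
      (fun k j j' h => by_contra fun hne => hτ j j' k k (hcolumn j j' k hne) h)
      (fun j => hτ j j 0 _ ((WithLp.prod_dist_toLp_left_eq _ _ _).trans hva))
      (by simp)
  refine ⟨i, j, j', hne, ?_⟩
  rintro _ _ _ _ rfl rfl rfl rfl
  refine ⟨⟨?_, ?_, hcolumn _ _ _ hne, hcolumn _ _ _ hne⟩, hcolors⟩ <;>
    exact (WithLp.prod_dist_toLp_left_eq _ _ _).trans (hvb i)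

theorem stmt14 (n₁ n₂ s r : ℕ) (a b : ℝ)
    (ha : 0 < a) (hb : 0 < b) (hs2 : 2 ≤ s) (hsab : a / b ≤ (s : ℝ)) (hr : 4 ≤ r)
    (S : Fin (3 * s + 1) → EuclideanSpace ℝ (Fin n₁))
    (hS : ∀ i j, i ≠ j → dist (S i) (S j) = a)
    (v : Fin (s + 1) → EuclideanSpace ℝ (Fin n₂))
    (hvb : ∀ i : Fin s, dist (v i.castSucc) (v i.succ) = b)
    (hva : dist (v 0) (v (Fin.last s)) = a)
    (τ : WithLp 2 (EuclideanSpace ℝ (Fin n₁) × EuclideanSpace ℝ (Fin n₂)) → Fin r)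
    (hτ : ∀ (i j : Fin (3 * s + 1)) (k l : Fin (s + 1)),
      dist ((WithLp.equiv 2 (EuclideanSpace ℝ (Fin n₁) × EuclideanSpace ℝ (Fin n₂))).symm (S i, v k))
          ((WithLp.equiv 2 (EuclideanSpace ℝ (Fin n₁) × EuclideanSpace ℝ (Fin n₂))).symm (S j, v l)) = a →
      τ ((WithLp.equiv 2 (EuclideanSpace ℝ (Fin n₁) × EuclideanSpace ℝ (Fin n₂))).symm (S i, v k)) ≠
        τ ((WithLp.equiv 2 (EuclideanSpace ℝ (Fin n₁) × EuclideanSpace ℝ (Fin n₂))).symm (S j, v l))) :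
    ∃ (i : Fin s) (j j' : Fin (3 * s + 1)), j ≠ j' ∧
      ∀ (p₁ p₂ p₃ p₄ : WithLp 2 (EuclideanSpace ℝ (Fin n₁) × EuclideanSpace ℝ (Fin n₂))),
        p₁ = (WithLp.equiv 2 _).symm (S j, v i.castSucc) →
        p₂ = (WithLp.equiv 2 _).symm (S j, v i.succ) →
        p₃ = (WithLp.equiv 2 _).symm (S j', v i.castSucc) →
        p₄ = (WithLp.equiv 2 _).symm (S j', v i.succ) →
        (dist p₁ p₂ = b ∧ dist p₃ p₄ = b ∧ dist p₁ p₃ = a ∧ dist p₂ p₄ = a) ∧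
        (τ p₁ ≠ τ p₂ ∧ τ p₁ ≠ τ p₃ ∧ τ p₁ ≠ τ p₄ ∧
          τ p₂ ≠ τ p₃ ∧ τ p₂ ≠ τ p₄ ∧ τ p₃ ≠ τ p₄) :=
  stmt14_general n₁ n₂ s r a b S hS v hvb hva τ hτ
end

section
/- Let C₁, C₂, C₃, C₄ be finite sets of colors, each of size at least 2. If there is no system of pairwise distinct representatives (i.e., no choice c_i ∈ C_i with all c_i distinct) and no color belonging to all four sets, then up to permuting the indices and relabeling colors, either (Type A) C₁ = {1,2}, C₂ = {2,3}, C₃ = {1,3}, and C₄ ⊆ {1,2,3}, or (Type B) C₁ = C₂ = C₃ = {1,2} and C₄ ⊇ {3,4} with C₄ ∩ {1,2} = ∅. -/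
/-! By Hall's theorem some subfamily `s` has fewer colours than members. As every set has at
least two colours, `|s| ≥ 3`. If `|s| = 3`, the three sets all equal their two-colour union
and, as no colour is common to all four, the fourth set avoids both colours (type B). If
`|s| = 4`, the union has exactly three colours (with two, every set would equal the union), and
each of them is missed by some set, which must then be the pair of the other two colours (type A). -/

open Finset

theorem Finset.exists_card_biUnion_lt_card {ι α : Type*} [DecidableEq α] (C : ι → Finset α)
    (h : ¬∃ f : ι → α, (∀ i, f i ∈ C i) ∧ Function.Injective f) :
    ∃ s : Finset ι, #(s.biUnion C) < #s := by
  by_contra! hall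
  obtain ⟨f, hf, hmem⟩ := (all_card_le_biUnion_card_iff_exists_injective C).mp hall
  exact h ⟨f, hmem, hf⟩

theorem Finset.lt_card_of_card_biUnion_lt_card {ι α : Type*} [DecidableEq α] {s : Finset ι}
    {C : ι → Finset α} {k : ℕ} (hC : ∀ i ∈ s, k ≤ #(C i)) (hs : #(s.biUnion C) < #s) :
    k < #s := by
  obtain ⟨i, hi⟩ : s.Nonempty := card_pos.mp (by omega)
  calc k ≤ #(C i) := hC i hi
    _ ≤ #(s.biUnion C) := card_le_card (subset_biUnion_of_mem C hi)
    _ < #s := hs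

theorem Finset.eq_biUnion_of_card_biUnion_le {ι α : Type*} [DecidableEq α] {s : Finset ι}
    {C : ι → Finset α} {k : ℕ} (hC : ∀ i ∈ s, k ≤ #(C i)) (hU : #(s.biUnion C) ≤ k) :
    ∀ i ∈ s, C i = s.biUnion C := fun i hi =>
  eq_of_subset_of_card_le (subset_biUnion_of_mem C hi) (hU.trans (hC i hi))

theorem Finset.eq_pair_of_subset_triple {α : Type*} [DecidableEq α] {t : Finset α} {a b c : α}
    (ht : t ⊆ {a, b, c}) (ha : a ∉ t) (h2 : 2 ≤ #t) : t = {b, c} :=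
  eq_of_subset_of_card_le ((subset_insert_iff_of_notMem ha).mp ht) (card_le_two.trans h2)

theorem Fin.exists_perm_four {i j k : Fin 4} (hij : i ≠ j) (hik : i ≠ k) (hjk : j ≠ k) :
    ∃ σ : Equiv.Perm (Fin 4), σ 0 = i ∧ σ 1 = j ∧ σ 2 = k := by
  revert i j k; decide

def IsTypeAOrB (D : Fin 4 → Finset ℕ) : Prop :=
  ∃ c₁ c₂ c₃ c₄ : ℕ,
    c₁ ≠ c₂ ∧ c₁ ≠ c₃ ∧ c₁ ≠ c₄ ∧ c₂ ≠ c₃ ∧ c₂ ≠ c₄ ∧ c₃ ≠ c₄ ∧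
    ((D 0 = {c₁, c₂} ∧ D 1 = {c₂, c₃} ∧ D 2 = {c₁, c₃} ∧ D 3 ⊆ {c₁, c₂, c₃}) ∨
      (D 0 = {c₁, c₂} ∧ D 1 = {c₁, c₂} ∧ D 2 = {c₁, c₂} ∧
        {c₃, c₄} ⊆ D 3 ∧ D 3 ∩ {c₁, c₂} = ∅))

section

variable (C : Fin 4 → Finset ℕ) (σ : Equiv.Perm (Fin 4))

theorem isTypeAOrB_of_pairs {a b c : ℕ} (hab : a ≠ b) (hac : a ≠ c) (hbc : b ≠ c)
    (h0 : C (σ 0) = {a, b}) (h1 : C (σ 1) = {b, c}) (h2 : C (σ 2) = {a, c})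
    (h3 : C (σ 3) ⊆ {a, b, c}) : IsTypeAOrB (C ∘ σ) := by
  -- type A says nothing about `c₄`; any fresh colour satisfies the distinctness clauses
  obtain ⟨d, hd⟩ := Infinite.exists_notMem_finset ({a, b, c} : Finset ℕ)
  simp only [mem_insert, mem_singleton, not_or] at hd
  exact ⟨a, b, c, d, hab, hac, Ne.symm hd.1, hbc, Ne.symm hd.2.1, Ne.symm hd.2.2,
    Or.inl ⟨h0, h1, h2, h3⟩⟩

theorem isTypeAOrB_of_three_eq_pair {a b : ℕ} (hab : a ≠ b)
    (h0 : C (σ 0) = {a, b}) (h1 : C (σ 1) = {a, b}) (h2 : C (σ 2) = {a, b})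
    (h3 : 2 ≤ #(C (σ 3))) (hnoCommon : ¬∃ c : ℕ, ∀ i, c ∈ C i) : IsTypeAOrB (C ∘ σ) := by
  have hdisj : Disjoint (C (σ 3)) {a, b} := by
    refine disjoint_left.mpr fun x hx3 hxab => hnoCommon ⟨x, fun m => ?_⟩
    obtain ⟨n, rfl⟩ := σ.surjective m
    fin_cases n <;> simp_all
  obtain ⟨c, hc, d, hd, hcd⟩ := one_lt_card.mp h3
  have hc' := disjoint_left.mp hdisj hc
  have hd' := disjoint_left.mp hdisj hd
  simp only [mem_insert, mem_singleton, not_or] at hc' hd'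
  exact ⟨a, b, c, d, hab, Ne.symm hc'.1, Ne.symm hd'.1, Ne.symm hc'.2, Ne.symm hd'.2, hcd,
    Or.inr ⟨h0, h1, h2, insert_subset hc (singleton_subset_iff.mpr hd),
      disjoint_iff_inter_eq_empty.mp hdisj⟩⟩

theorem exists_isTypeAOrB_of_card_biUnion_lt_three {s : Finset (Fin 4)} (hs3 : #s = 3)
    (hcard : ∀ i, 2 ≤ #(C i)) (hnoCommon : ¬∃ c : ℕ, ∀ i, c ∈ C i)
    (hs : #(s.biUnion C) < 3) : ∃ σ : Equiv.Perm (Fin 4), IsTypeAOrB (C ∘ σ) := by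
  obtain ⟨i, j, k, hij, hik, hjk, rfl⟩ := card_eq_three.mp hs3
  have hCeq := eq_biUnion_of_card_biUnion_le (fun i _ => hcard i) (Nat.lt_succ_iff.mp hs)
  have hU2 : #(({i, j, k} : Finset (Fin 4)).biUnion C) = 2 := by
    have := hcard i; rw [hCeq i (by simp)] at this; omega
  obtain ⟨a, b, hab, hU⟩ := card_eq_two.mp hU2
  obtain ⟨σ, rfl, rfl, rfl⟩ := Fin.exists_perm_four hij hik hjk
  exact ⟨σ, isTypeAOrB_of_three_eq_pair C σ hab (by simp [hCeq, hU]) (by simp [hCeq, hU])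
    (by simp [hCeq, hU]) (hcard _) hnoCommon⟩

theorem exists_isTypeAOrB_of_card_biUnion_univ_lt_four
    (hcard : ∀ i, 2 ≤ #(C i)) (hnoCommon : ¬∃ c : ℕ, ∀ i, c ∈ C i)
    (hU : #(univ.biUnion C) < 4) : ∃ σ : Equiv.Perm (Fin 4), IsTypeAOrB (C ∘ σ) := by
  have hU3 : #(univ.biUnion C) = 3 := by
    refine le_antisymm (by omega) (not_lt.mp fun hU2 => hnoCommon ?_)
    have hCeq := eq_biUnion_of_card_biUnion_le (fun i _ => hcard i) (Nat.lt_succ_iff.mp hU2)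
    obtain ⟨x, hx⟩ := card_pos.mp (show 0 < #(C 0) by have := hcard 0; omega)
    refine ⟨x, fun i => ?_⟩
    rwa [hCeq i (mem_univ i), ← hCeq 0 (mem_univ 0)]
  obtain ⟨a, b, c, hab, hac, hbc, hU⟩ := card_eq_three.mp hU3
  have hsub : ∀ i, C i ⊆ {a, b, c} := fun i => hU ▸ subset_biUnion_of_mem C (mem_univ i)
  push Not at hnoCommon
  obtain ⟨i₀, hc₀⟩ := hnoCommon c
  obtain ⟨i₁, ha₁⟩ := hnoCommon a
  obtain ⟨i₂, hb₂⟩ := hnoCommon b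
  have h₀ : C i₀ = {a, b} :=
    eq_pair_of_subset_triple ((hsub i₀).trans (by intro x; simp only [mem_insert, mem_singleton]; tauto)) hc₀ (hcard i₀)
  have h₁ : C i₁ = {b, c} := eq_pair_of_subset_triple (hsub i₁) ha₁ (hcard i₁)
  have h₂ : C i₂ = {a, c} :=
    eq_pair_of_subset_triple ((hsub i₂).trans (by intro x; simp only [mem_insert, mem_singleton]; tauto)) hb₂ (hcard i₂)
  have h01 : i₀ ≠ i₁ := by rintro rfl; simp [h₁] at hc₀
  have h02 : i₀ ≠ i₂ := by rintro rfl; simp [h₂] at hc₀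
  have h12 : i₁ ≠ i₂ := by rintro rfl; simp [h₂] at ha₁
  obtain ⟨σ, rfl, rfl, rfl⟩ := Fin.exists_perm_four h01 h02 h12
  exact ⟨σ, isTypeAOrB_of_pairs C σ hab hac hbc h₀ h₁ h₂ (hsub _)⟩

end

theorem stmt15 (C : Fin 4 → Finset ℕ) (hcard : ∀ i, 2 ≤ (C i).card)
    (hnoSDR : ¬∃ f : Fin 4 → ℕ, (∀ i, f i ∈ C i) ∧ Function.Injective f)
    (hnoCommon : ¬∃ c : ℕ, ∀ i, c ∈ C i) :
    ∃ (σ : Equiv.Perm (Fin 4)) (c₁ c₂ c₃ c₄ : ℕ),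
      c₁ ≠ c₂ ∧ c₁ ≠ c₃ ∧ c₁ ≠ c₄ ∧ c₂ ≠ c₃ ∧ c₂ ≠ c₄ ∧ c₃ ≠ c₄ ∧
      ((C (σ 0) = {c₁, c₂} ∧ C (σ 1) = {c₂, c₃} ∧ C (σ 2) = {c₁, c₃} ∧
          C (σ 3) ⊆ {c₁, c₂, c₃}) ∨
        (C (σ 0) = {c₁, c₂} ∧ C (σ 1) = {c₁, c₂} ∧ C (σ 2) = {c₁, c₂} ∧
          {c₃, c₄} ⊆ C (σ 3) ∧ C (σ 3) ∩ {c₁, c₂} = ∅)) := by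
  obtain ⟨s, hs⟩ := exists_card_biUnion_lt_card C hnoSDR
  have hs3 : 2 < #s := lt_card_of_card_biUnion_lt_card (fun i _ => hcard i) hs
  obtain h3 | h4 : #s = 3 ∨ #s = 4 := by have := card_le_univ s; rw [Fintype.card_fin] at this; omega
  · exact exists_isTypeAOrB_of_card_biUnion_lt_three C h3 hcard hnoCommon (by omega)
  · obtain rfl : s = univ := eq_univ_of_card s h4
    exact exists_isTypeAOrB_of_card_biUnion_univ_lt_four C hcard hnoCommon (by omega)
end
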